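/- arXiv:0901.2502 — 2 statements merged into one kernel-verified Lean document; each statement's English description precedes it below -/
import Mathlib

section
/- Let K be a simplicial complex, b ⊆ [n] nonempty with b not a face of K, and set Ũ_b(K) = {f ∈ K : (f ∪ b) \ {v} ∉ K for some v ∈ b} and L_b = ⋂_{b' ⊊ b} link(b', K). If Ũ_b(K) = ∅, then K = L_b ∗ ∂b, the join of L_b with the boundary complex of b. -/
/-!
Every face `f` splits as `(f \ b) ∪ (f ∩ b)`. Since `b ∉ K`, the part `f ∩ b` is a proper subset
of `b`. For a proper subset `b'` of `b`, pick `v ∈ b \ b'`; as `Ũ_b(K) = ∅`, the face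
`(f ∪ b) \ {v}` lies in `K` and contains `(f \ b) ∪ b'`, so `f \ b` lies in every link
`link(b', K)`, i.e. in `L_b`.
-/

namespace Finset

variable {α : Type*} [DecidableEq α]

theorem sdiff_union_subset_erase_union {f b b' : Finset α} {v : α}
    (hb' : b' ⊆ b) (hv : v ∉ b') (hvb : v ∈ b) :
    f \ b ∪ b' ⊆ (f ∪ b).erase v := by
  intro x hx
  rw [mem_erase, mem_union]
  rcases mem_union.mp hx with hx | hx
  · exact ⟨fun he => (mem_sdiff.mp hx).2 (he ▸ hvb), Or.inl (mem_sdiff.mp hx).1⟩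
  · exact ⟨fun he => hv (he ▸ hx), Or.inr (hb' hx)⟩

theorem sdiff_inter_eq_empty_of_subset {f b b' : Finset α} (hb' : b' ⊆ b) :
    f \ b ∩ b' = ∅ :=
  disjoint_iff_inter_eq_empty.mp (disjoint_sdiff_self_left.mono_right hb')

end Finset

open Finset

variable {α : Type*} [DecidableEq α] {K : Set (Finset α)} {b f : Finset α}

theorem inter_ssubset_of_mem_of_notMem (hdc : ∀ f ∈ K, ∀ g ⊆ f, g ∈ K) (hbK : b ∉ K) (hf : f ∈ K) :
    f ∩ b ⊂ b :=
  inter_subset_right.ssubset_of_ne fun he => hbK (hdc f hf b (he ▸ inter_subset_left))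

theorem sdiff_mem_link_of_ssubset (hdc : ∀ f ∈ K, ∀ g ⊆ f, g ∈ K)
    (hU : ∀ f ∈ K, ∀ v ∈ b, (f ∪ b).erase v ∈ K) (hf : f ∈ K) {b' : Finset α} (hb' : b' ⊂ b) :
    f \ b ∈ K ∧ f \ b ∩ b' = ∅ ∧ f \ b ∪ b' ∈ K := by
  obtain ⟨v, hvb, hvb'⟩ := exists_of_ssubset hb'
  exact ⟨hdc f hf _ sdiff_subset, sdiff_inter_eq_empty_of_subset hb'.subset,
    hdc _ (hU f hf v hvb) _ (sdiff_union_subset_erase_union hb'.subset hvb' hvb)⟩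

theorem eq_join_of_Utilde_empty_general
    (K : Set (Finset ℕ))
    (hdc : ∀ f ∈ K, ∀ g ⊆ f, g ∈ K)
    (b : Finset ℕ) (hbK : b ∉ K)
    (hU : {f | f ∈ K ∧ ∃ v ∈ b, (f ∪ b).erase v ∉ K} = ∅) :
    K = {s : Finset ℕ | ∃ l,
      (∀ b' ⊂ b, l ∈ K ∧ l ∩ b' = ∅ ∧ l ∪ b' ∈ K) ∧
      ∃ g ⊂ b, s = l ∪ g} := by
  have hU' : ∀ f ∈ K, ∀ v ∈ b, (f ∪ b).erase v ∈ K := fun f hf v hv => by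
    by_contra h
    exact (Set.eq_empty_iff_forall_notMem.mp hU) f ⟨hf, v, hv, h⟩
  ext f
  constructor
  · intro hf
    exact ⟨f \ b, fun _ hb' => sdiff_mem_link_of_ssubset hdc hU' hf hb',
      f ∩ b, inter_ssubset_of_mem_of_notMem hdc hbK hf, (sdiff_union_inter f b).symm⟩
  · rintro ⟨l, hl, g, hg, rfl⟩
    exact (hl g hg).2.2

/-- If `b` is a nonempty non-face of the simplicial complex `K` and
`Ũ_b(K) = {f ∈ K : (f ∪ b) \ {v} ∉ K for some v ∈ b}` is empty, then
`K = L_b ∗ ∂b`, where `L_b = ⋂_{b' ⊊ b} link(b',K)` and `∂b` is the boundary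
complex of `b` (all proper subsets of `b`). -/
theorem eq_join_of_Utilde_empty
    (K : Set (Finset ℕ))
    (hdc : ∀ f ∈ K, ∀ g ⊆ f, g ∈ K)
    (b : Finset ℕ) (hbne : b.Nonempty) (hbK : b ∉ K)
    (hU : {f | f ∈ K ∧ ∃ v ∈ b, (f ∪ b).erase v ∉ K} = ∅) :
    K = {s : Finset ℕ | ∃ l,
      (∀ b' ⊂ b, l ∈ K ∧ l ∩ b' = ∅ ∧ l ∪ b' ∈ K) ∧
      ∃ g ⊂ b, s = l ∪ g} :=
  eq_join_of_Utilde_empty_general K hdc b hbK hU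
end

section
/- Let K be a simplicial complex on [n] and A_K its Stanley-Reisner ring over a field k. The annihilator of x_i in A_K satisfies: Ann(x_i) + I_K (as an ideal of the polynomial ring P = k[x_0,…,x_n], pulled back) equals the Stanley-Reisner ideal of the closed star st̄({i}, K); that is, P/(Ann(x_i) pulled back) ≅ A_{st̄({i},K)}. -/
/-!
The Stanley–Reisner ideal `I_M` is spanned by monomials, so `p ∈ I_M` iff every monomial of `p`
is divisible by some `x_f` with `f ∉ M`; when `M` is closed under subsets this just says that the
support of every monomial of `p` is a non-face. Multiplying by `x_i` inserts `i` into each of these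
supports, and for a face-closed `K` we have `insert i s ∉ K` iff `s ∉ st̄({i}, K)`.
-/

open MvPolynomial

/-- The Stanley–Reisner ideal of a complex `M` on vertex set `α`. -/
noncomputable def srIdeal (k : Type*) [Field k] {α : Type*} (M : Set (Finset α)) :
    Ideal (MvPolynomial α k) :=
  Ideal.span {m | ∃ p : Finset α, p ∉ M ∧ m = ∏ i ∈ p, X i}

lemma Finsupp.sum_single_one_le_iff {α : Type*} {f : Finset α} {d : α →₀ ℕ} :
    ∑ j ∈ f, single j 1 ≤ d ↔ f ⊆ d.support := by
  classical
  simp only [le_def, finsetSum_apply, single_apply, Finset.sum_ite_eq', Finset.subset_iff,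
    mem_support_iff]
  refine forall_congr' fun a => ?_
  split_ifs with ha <;> simp [ha, Nat.one_le_iff_ne_zero]

section StanleyReisner

variable {k : Type*} [Field k] {α : Type*}

lemma srIdeal_eq_span_monomial (M : Set (Finset α)) :
    srIdeal k M = Ideal.span ((fun d => monomial d (1 : k)) ''
      ((fun f => ∑ j ∈ f, Finsupp.single j 1) '' Mᶜ)) := by
  rw [srIdeal, Set.image_image]
  congr 1
  ext m
  simp [monomial_sum_one, X, eq_comm]

lemma mem_srIdeal_iff {M : Set (Finset α)} {p : MvPolynomial α k} :
    p ∈ srIdeal k M ↔ ∀ d ∈ p.support, ∃ f ∉ M, f ⊆ d.support := by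
  simp [srIdeal_eq_span_monomial, mem_ideal_span_monomial_image, Finsupp.sum_single_one_le_iff]

lemma mem_srIdeal_iff_of_downward_closed {M : Set (Finset α)} (hM : ∀ f ∈ M, ∀ g ⊆ f, g ∈ M)
    {p : MvPolynomial α k} : p ∈ srIdeal k M ↔ ∀ d ∈ p.support, d.support ∉ M := by
  rw [mem_srIdeal_iff]
  exact forall₂_congr fun d _ =>
    ⟨fun ⟨f, hf, hfd⟩ hd => hf (hM _ hd _ hfd), fun hd => ⟨d.support, hd, subset_rfl⟩⟩

end StanleyReisner

theorem ann_xi_eq_SR_ideal_closedStar_general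
    (k : Type*) [Field k] (n : ℕ)
    (K : Set (Finset (Fin (n + 1))))
    (hdc : ∀ f ∈ K, ∀ g ⊆ f, g ∈ K)
    (i : Fin (n + 1)) :
    ∀ p : MvPolynomial (Fin (n + 1)) k,
      p * X i ∈ srIdeal k K ↔ p ∈ srIdeal k {g | g ∈ K ∧ insert i g ∈ K} := by
  have hstar : ∀ f ∈ {g | g ∈ K ∧ insert i g ∈ K}, ∀ g ⊆ f, g ∈ {g | g ∈ K ∧ insert i g ∈ K} :=
    fun f hf g hgf => ⟨hdc f hf.1 g hgf, hdc _ hf.2 _ (Finset.insert_subset_insert i hgf)⟩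
  intro p
  rw [mem_srIdeal_iff_of_downward_closed hdc, mem_srIdeal_iff_of_downward_closed hstar,
    support_mul_X, Finset.forall_mem_map]
  refine forall₂_congr fun d _ => ?_
  rw [addRightEmbedding_apply, Finsupp.support_add_eq_union,
    Finsupp.support_single _ one_ne_zero, Finset.union_singleton, Set.mem_ofPred_eq, not_and]
  exact ⟨fun h _ => h, fun h hins => h (hdc _ hins _ (Finset.subset_insert i _)) hins⟩

/-- the preimage in `P = k[x_0,…,x_n]` of the annihilator of
`x̄_i ∈ A_K` is exactly the Stanley–Reisner ideal of the closed star
`st̄({i},K) = {g ∈ K : g ∪ {i} ∈ K}`; i.e. `p·x_i ∈ I_K ↔ p ∈ I_{st̄({i},K)}`. -/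
theorem ann_xi_eq_SR_ideal_closedStar
    (k : Type*) [Field k] (n : ℕ)
    (K : Set (Finset (Fin (n + 1))))
    (hdc : ∀ f ∈ K, ∀ g ⊆ f, g ∈ K)
    (i : Fin (n + 1)) (hi : ({i} : Finset (Fin (n + 1))) ∈ K) :
    ∀ p : MvPolynomial (Fin (n + 1)) k,
      p * X i ∈ srIdeal k K ↔ p ∈ srIdeal k {g | g ∈ K ∧ insert i g ∈ K} :=
  ann_xi_eq_SR_ideal_closedStar_general k n K hdc i
end
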